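/- Let r be a nonnegative, monotone, submodular, integer-valued function on subsets of a finite edge set E of a coloured graph, and define f(F) = r(F) + k(F), where k(F) is the number of colours on V(F). Suppose E is f-sparse (|F| ≤ f(F) for all F ⊆ E). Then for each colour c, if a c-tight set exists (a nonempty F with |F| = f(F) and c appearing on V(F)), the inclusionwise minimal c-tight set is unique. -/
import Mathlib


open Finset

attribute [local instance] Classical.propDecidable

noncomputable section

variable {V C : Type*}

/-- The set of vertices spanned by an edge set. -/
def eVerts [Fintype V] [DecidableEq V] (F : Finset (Sym2 V)) : Finset V :=
  Finset.univ.filter fun v => ∃ e ∈ F, v ∈ e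

/-- The set of colours appearing on the vertices spanned by an edge set. -/
def eCols [Fintype V] [DecidableEq V] [DecidableEq C] (χ : V → Option C)
    (F : Finset (Sym2 V)) : Finset C :=
  (eVerts F).biUnion fun v => (χ v).toFinset

/-- The number of colours appearing on the vertices spanned by an edge set. -/
def kCount [Fintype V] [DecidableEq V] [DecidableEq C] (χ : V → Option C)
    (F : Finset (Sym2 V)) : ℤ :=
  (eCols χ F).card

/-- The set of all colours used by the colouring. -/
def usedCols [Fintype V] [DecidableEq C] (χ : V → Option C) : Finset C :=
  Finset.univ.biUnion fun v => (χ v).toFinset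

/-- The number of connected components of the graph `(V(F), F)`. -/
def omegaCount [Fintype V] [DecidableEq V] (F : Finset (Sym2 V)) : ℤ :=
  ((eVerts F).image fun v =>
    (eVerts F).filter fun u =>
      (SimpleGraph.fromEdgeSet (↑F : Set (Sym2 V))).Reachable v u).card

/-- The function `h_d(F) = min{k(F), |V(F)| - (d+1)}`. -/
def hFun [Fintype V] [DecidableEq V] [DecidableEq C] (χ : V → Option C) (d : ℕ)
    (F : Finset (Sym2 V)) : ℤ :=
  min (kCount χ F) (((eVerts F).card : ℤ) - (d + 1))

/-- A vertex is colour-isolated if it is coloured and no other vertex has its colour. -/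
def ColourIsolated (χ : V → Option C) (v : V) : Prop :=
  ∃ c, χ v = some c ∧ ∀ u, u ≠ v → χ u ≠ some c

/-- `F` is `c`-tight with respect to `f = r + k`: nonempty, inside `E`,
`|F| = r(F) + k(F)`, and colour `c` appears on `V(F)`. -/
def CTightR {V C : Type*} [Fintype V] [DecidableEq V] [DecidableEq C]
    (χ : V → Option C) (r : Finset (Sym2 V) → ℤ) (E : Finset (Sym2 V)) (c : C)
    (F : Finset (Sym2 V)) : Prop :=
  F.Nonempty ∧ F ⊆ E ∧ (F.card : ℤ) = r F + kCount χ F ∧ c ∈ eCols χ F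


lemma eVerts_mono {V : Type*} [Fintype V] [DecidableEq V] {X Y : Finset (Sym2 V)}
    (h : X ⊆ Y) : eVerts X ⊆ eVerts Y := by
  intro v hv
  simp only [eVerts, mem_filter, mem_univ, true_and] at hv ⊢
  obtain ⟨e, he, hve⟩ := hv
  exact ⟨e, h he, hve⟩

lemma eCols_mono {V C : Type*} [Fintype V] [DecidableEq V] [DecidableEq C]
    (χ : V → Option C) {X Y : Finset (Sym2 V)} (h : X ⊆ Y) :
    eCols χ X ⊆ eCols χ Y := by
  intro a ha
  simp only [eCols, mem_biUnion] at ha ⊢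
  obtain ⟨v, hv, hav⟩ := ha
  exact ⟨v, eVerts_mono h hv, hav⟩

lemma eCols_union {V C : Type*} [Fintype V] [DecidableEq V] [DecidableEq C]
    (χ : V → Option C) (X Y : Finset (Sym2 V)) :
    eCols χ (X ∪ Y) = eCols χ X ∪ eCols χ Y := by
  ext a
  simp only [eCols, eVerts, mem_biUnion, mem_union, mem_filter, mem_univ, true_and]
  constructor
  · rintro ⟨v, ⟨e, he | he, hve⟩, hav⟩
    · exact Or.inl ⟨v, ⟨e, he, hve⟩, hav⟩
    · exact Or.inr ⟨v, ⟨e, he, hve⟩, hav⟩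
  · rintro (⟨v, ⟨e, he, hve⟩, hav⟩ | ⟨v, ⟨e, he, hve⟩, hav⟩)
    · exact ⟨v, ⟨e, Or.inl he, hve⟩, hav⟩
    · exact ⟨v, ⟨e, Or.inr he, hve⟩, hav⟩

/-- for a nonnegative monotone submodular `r` and `f = r + k`, if the
coloured graph is `f`-sparse, then for each colour `c` any two inclusionwise minimal
`c`-tight sets coincide. -/
theorem f_sparse_unique_minimal_tight {V C : Type*} [Fintype V] [DecidableEq V] [DecidableEq C]
    (G : SimpleGraph V) (χ : V → Option C)
    (r : Finset (Sym2 V) → ℤ)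
    (hnonneg : ∀ F, 0 ≤ r F)
    (hmono : ∀ X Y : Finset (Sym2 V), X ⊆ Y → r X ≤ r Y)
    (hsub : ∀ X Y : Finset (Sym2 V), r (X ∪ Y) + r (X ∩ Y) ≤ r X + r Y)
    (E : Finset (Sym2 V)) (hE : ∀ e, e ∈ E ↔ e ∈ G.edgeSet)
    (hsparse : ∀ F ⊆ E, (F.card : ℤ) ≤ r F + kCount χ F)
    (c : C) (hex : ∃ F, CTightR χ r E c F)
    (F₁ F₂ : Finset (Sym2 V))
    (h₁ : CTightR χ r E c F₁) (h₁min : ∀ F', CTightR χ r E c F' → F' ⊆ F₁ → F' = F₁)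
    (h₂ : CTightR χ r E c F₂) (h₂min : ∀ F', CTightR χ r E c F' → F' ⊆ F₂ → F' = F₂) :
    F₁ = F₂ := by
  classical
  obtain ⟨hne₁, hE₁, heq₁, hc₁⟩ := h₁
  obtain ⟨hne₂, hE₂, heq₂, hc₂⟩ := h₂
  set A := F₁ ∩ F₂ with hAdef
  set U := F₁ ∪ F₂ with hUdef
  have hUE : U ⊆ E := union_subset hE₁ hE₂
  have hAE : A ⊆ E := (inter_subset_left).trans hE₁
  have hUs : (U.card : ℤ) ≤ r U + kCount χ U := hsparse U hUE
  have hAs : (A.card : ℤ) ≤ r A + kCount χ A := hsparse A hAE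
  have hcards : U.card + A.card = F₁.card + F₂.card := card_union_add_card_inter F₁ F₂
  have hkU : eCols χ U = eCols χ F₁ ∪ eCols χ F₂ := eCols_union χ F₁ F₂
  have hcap : eCols χ A ⊆ eCols χ F₁ ∩ eCols χ F₂ :=
    subset_inter (eCols_mono χ inter_subset_left) (eCols_mono χ inter_subset_right)
  have hkcard : (eCols χ F₁ ∪ eCols χ F₂).card + (eCols χ F₁ ∩ eCols χ F₂).card
      = (eCols χ F₁).card + (eCols χ F₂).card := card_union_add_card_inter _ _
  have hAcap : (eCols χ A).card ≤ (eCols χ F₁ ∩ eCols χ F₂).card := card_le_card hcap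
  have hrsub : r U + r A ≤ r F₁ + r F₂ := hsub F₁ F₂
  -- derive that all inequalities are tight
  have hkA : (eCols χ A).card = (eCols χ F₁ ∩ eCols χ F₂).card := by
    simp only [kCount, hkU] at *
    omega
  have hAeq : (A.card : ℤ) = r A + kCount χ A := by
    simp only [kCount, hkU] at *
    omega
  have hcolseq : eCols χ A = eCols χ F₁ ∩ eCols χ F₂ :=
    Finset.eq_of_subset_of_card_le hcap (le_of_eq hkA.symm)
  have hcA : c ∈ eCols χ A := by
    rw [hcolseq]; exact mem_inter.mpr ⟨hc₁, hc₂⟩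
  have hAne : A.Nonempty := by
    simp only [eCols, mem_biUnion, eVerts, mem_filter] at hcA
    obtain ⟨v, ⟨_, e, he, _⟩, _⟩ := hcA
    exact ⟨e, he⟩
  have hAtight : CTightR χ r E c A := ⟨hAne, hAE, hAeq, hcA⟩
  have e1 : A = F₁ := h₁min A hAtight inter_subset_left
  have e2 : A = F₂ := h₂min A hAtight inter_subset_right
  rw [← e1, ← e2]
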